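/- The Schwefel function f(x) = -Σ_{i=1}^n x_i·sin(√|x_i|) satisfies f(x) ≥ -419·n for every x ∈ ℝ^n with -500 ≤ x_i ≤ 500 for all i, consistent with the claimed global minimum value f* ≈ -418.9829·n. -/

import Mathlib

/-!
Writing `s = √|x|`, each summand satisfies `x sin s ≤ s² |sin s|` with `0 ≤ s ≤ √500 < 7π + 0.37`,
so it suffices to bound `s² |sin s|` by `419`. This is clear when `s² ≤ 419`; otherwise
`13π/2 ≤ s`. On the arch `[13π/2, 7π]` put `s = 13π/2 + t`, so that `|sin s| = cos t`, and bound
`cos t` by its Taylor polynomial of degree four; past `7π` one has `|sin s| ≤ s - 7π ≤ 0.37`.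
-/

open Real

lemma cos_le_quartic {t : ℝ} (h0 : 0 ≤ t) (h1 : t ≤ 1) :
    cos t ≤ 1 - t ^ 2 / 2 + 5 / 96 * t ^ 4 := by
  have h := abs_le.1 (cos_bound (abs_le.2 ⟨by linarith, h1⟩))
  rw [abs_of_nonneg h0] at h
  linarith [h.2]

/-- The maximum of `s² sin s` on `[0, √500]`, about `418.983`, is attained at `s = 13π/2 + t`
with `t ≈ 0.0975`. -/
lemma schwefel_peak_le {t : ℝ} (h0 : 0 ≤ t) (h2 : t ≤ π / 2) :
    (13 * π / 2 + t) ^ 2 * cos t ≤ 419 := by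
  have hπ : π < 3.141593 := pi_lt_d6
  have hcos_nonneg : 0 ≤ cos t := cos_nonneg_of_mem_Icc ⟨by linarith [pi_pos], h2⟩
  rcases le_or_gt t 1 with h1 | h1
  · have hq : 0 ≤ 1 - t ^ 2 / 2 + 5 / 96 * t ^ 4 := by nlinarith
    calc (13 * π / 2 + t) ^ 2 * cos t
        ≤ (2042036 / 100000 + t) ^ 2 * (1 - t ^ 2 / 2 + 5 / 96 * t ^ 4) := by
          gcongr (?_ + t) ^ 2 * ?_
          · linarith
          · exact cos_le_quartic h0 h1
      _ ≤ 419 := by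
          nlinarith [sq_nonneg (t - 39 / 400), mul_nonneg h0 (sq_nonneg (t - 39 / 400)),
            pow_nonneg h0 3, pow_nonneg h0 4]
  · have hcos_one : cos 1 ≤ 53 / 96 := by
      have := cos_le_quartic zero_le_one le_rfl
      norm_num at this ⊢
      linarith
    have hcos : cos t ≤ cos 1 := cos_le_cos_of_nonneg_of_le_pi zero_le_one (by linarith) h1.le
    calc (13 * π / 2 + t) ^ 2 * cos t ≤ 22 ^ 2 * (53 / 96) := by
          gcongr ?_ ^ 2 * ?_
          · linarith [pi_pos]
          · linarith
      _ ≤ 419 := by norm_num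

lemma sq_mul_abs_sin_le {s : ℝ} (hs : 0 ≤ s) (hs500 : s ^ 2 ≤ 500) :
    s ^ 2 * |sin s| ≤ 419 := by
  have hπl : 3.141592 < π := pi_gt_d6
  have hπu : π < 3.141593 := pi_lt_d6
  rcases le_or_gt (s ^ 2) 419 with hsmall | hlarge
  · nlinarith [abs_sin_le_one s, abs_nonneg (sin s)]
  have hlow : 13 * π / 2 ≤ s := by nlinarith
  rcases le_or_gt s (7 * π) with harch | htail
  · obtain ⟨t, rfl⟩ : ∃ t, s = 13 * π / 2 + t := ⟨s - 13 * π / 2, by ring⟩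
    have hsin : sin (13 * π / 2 + t) = cos t := by
      rw [show 13 * π / 2 + t = t + π / 2 + (3 : ℕ) * (2 * π) by push_cast; ring,
        sin_add_nat_mul_two_pi, sin_add_pi_div_two]
    have ht : t ≤ π / 2 := by linarith
    rw [hsin, abs_of_nonneg (cos_nonneg_of_mem_Icc ⟨by linarith, ht⟩)]
    exact schwefel_peak_le (by linarith) ht
  · have hsin : |sin s| = |sin (s - 7 * π)| := by
      rw [show (7 : ℝ) = (7 : ℕ) by norm_num, sin_sub_nat_mul_pi, abs_mul]; simp
    have htail : |sin s| ≤ 37 / 100 := by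
      rw [hsin]
      refine abs_sin_le_abs.trans ?_
      rw [abs_of_pos (by linarith)]
      nlinarith
    nlinarith [abs_nonneg (sin s)]

lemma mul_sin_sqrt_abs_le {y : ℝ} (hy : |y| ≤ 500) : y * sin (√|y|) ≤ 419 := by
  have hsq : √|y| ^ 2 = |y| := sq_sqrt (abs_nonneg y)
  calc y * sin (√|y|) ≤ |y| * |sin (√|y|)| := by rw [← abs_mul]; exact le_abs_self _
    _ = √|y| ^ 2 * |sin (√|y|)| := by rw [hsq]
    _ ≤ 419 := sq_mul_abs_sin_le (sqrt_nonneg _) (hsq.trans_le hy)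

theorem schwefel_lower_bound_general (n : ℕ) (f : (Fin n → ℝ) → ℝ)
    (hf : ∀ x : Fin n → ℝ,
      f x = -(∑ i, x i * Real.sin (Real.sqrt |x i|))) :
    ∀ x : Fin n → ℝ, (∀ i, -500 ≤ x i ∧ x i ≤ 500) → -419 * (n : ℝ) ≤ f x := by
  intro x hx
  have hterm : ∑ i, x i * sin √|x i| ≤ ∑ _i : Fin n, (419 : ℝ) :=
    Finset.sum_le_sum fun i _ => mul_sin_sqrt_abs_le (abs_le.2 (hx i))
  rw [Finset.sum_const, Finset.card_univ, Fintype.card_fin, nsmul_eq_mul] at hterm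
  rw [hf]
  linarith

/-- The Schwefel function is bounded below by -419·n on the box [-500, 500]^n. -/
theorem schwefel_lower_bound (n : ℕ) (hn : 1 ≤ n) (f : (Fin n → ℝ) → ℝ)
    (hf : ∀ x : Fin n → ℝ,
      f x = -(∑ i, x i * Real.sin (Real.sqrt |x i|))) :
    ∀ x : Fin n → ℝ, (∀ i, -500 ≤ x i ∧ x i ≤ 500) → -419 * (n : ℝ) ≤ f x :=
  schwefel_lower_bound_general n f hf
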